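/- There do not exist real numbers q1, q2, q3 ∈ [0,1] with q1 + q2 + q3 = 2 and non-negative real numbers A, B, C, a1, a2, a3 with C ≥ B ≥ A ≥ 0 and (1/4)·A + B + C + a1 + a2 + a3 = 1, such that all three of the following hold: q1·B + q1²·(a2 + a3) > 8/27, q2·A + q2²·(a1 + a3) > 8/27, and q3·C + q3²·(a1 + a2) > 8/27. -/

import Mathlib

/-!
Weight the three inequalities by `1 - q₁, 1 - q₂, 1 - q₃`: these weights are nonnegative and sum
to `1`, so the weighted sum of the left-hand sides would exceed `8/27`. On the other hand, with
`uᵢ = (1 - qᵢ) qᵢ` and `vᵢ = (1 - qᵢ) qᵢ²` the weighted sum equals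
`A (u₁ + u₂ + u₃) + (B - A)(u₁ + u₃) + (C - B) u₃ + a₁ (v₂ + v₃) + a₂ (v₁ + v₃) + a₃ (v₁ + v₂)`,
while the budget reads `(9/4) A + 2 (B - A) + (C - B) + a₁ + a₂ + a₃ = 1`. Since `uᵢ ≤ 1/4`,
`u₁ + u₂ + u₃ = 2 - ∑ qᵢ² ≤ 2/3` and `vᵢ ≤ 4/27`, each coefficient is at most `8/27` times the
corresponding budget coefficient, so the weighted sum is at most `8/27`.
-/

lemma one_sub_mul_self_le (q : ℝ) : (1 - q) * q ≤ 1 / 4 := by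
  nlinarith [sq_nonneg (2 * q - 1)]

lemma one_sub_mul_sq_le {q : ℝ} (hq : 0 ≤ q) : (1 - q) * q ^ 2 ≤ 4 / 27 := by
  nlinarith [mul_nonneg (sq_nonneg (3 * q - 2)) (by linarith : 0 ≤ 3 * q + 1)]

lemma sum_one_sub_mul_self_le {q₁ q₂ q₃ : ℝ} (h : q₁ + q₂ + q₃ = 2) :
    (1 - q₁) * q₁ + (1 - q₂) * q₂ + (1 - q₃) * q₃ ≤ 2 / 3 := by
  nlinarith [sq_nonneg (q₁ - q₂), sq_nonneg (q₂ - q₃), sq_nonneg (q₁ - q₃)]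

lemma lt_weighted_sum_of_lt {w₁ w₂ w₃ x₁ x₂ x₃ c : ℝ} (hw₁ : 0 ≤ w₁) (hw₂ : 0 ≤ w₂)
    (hw₃ : 0 ≤ w₃) (hw : w₁ + w₂ + w₃ = 1) (h₁ : c < x₁) (h₂ : c < x₂) (h₃ : c < x₃) :
    c < w₁ * x₁ + w₂ * x₂ + w₃ * x₃ := by
  have hpos : 0 < w₁ * (x₁ - c) + w₂ * (x₂ - c) + w₃ * (x₃ - c) := by
    rcases (show 0 < w₁ ∨ 0 < w₂ ∨ 0 < w₃ by by_contra! h; linarith) with hw' | hw' | hw'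
    · nlinarith [mul_pos hw' (sub_pos.2 h₁), mul_nonneg hw₂ (sub_pos.2 h₂).le,
        mul_nonneg hw₃ (sub_pos.2 h₃).le]
    · nlinarith [mul_nonneg hw₁ (sub_pos.2 h₁).le, mul_pos hw' (sub_pos.2 h₂),
        mul_nonneg hw₃ (sub_pos.2 h₃).le]
    · nlinarith [mul_nonneg hw₁ (sub_pos.2 h₁).le, mul_nonneg hw₂ (sub_pos.2 h₂).le,
        mul_pos hw' (sub_pos.2 h₃)]
  linear_combination hpos - c * hw

lemma weighted_sum_le {q₁ q₂ q₃ A B C a₁ a₂ a₃ : ℝ} (hq₁ : 0 ≤ q₁) (hq₂ : 0 ≤ q₂)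
    (hq₃ : 0 ≤ q₃) (hq : q₁ + q₂ + q₃ = 2) (hA : 0 ≤ A) (hAB : A ≤ B) (hBC : B ≤ C)
    (ha₁ : 0 ≤ a₁) (ha₂ : 0 ≤ a₂) (ha₃ : 0 ≤ a₃)
    (hbudget : (1 / 4) * A + B + C + a₁ + a₂ + a₃ = 1) :
    (1 - q₁) * (q₁ * B + q₁ ^ 2 * (a₂ + a₃)) + (1 - q₂) * (q₂ * A + q₂ ^ 2 * (a₁ + a₃)) +
      (1 - q₃) * (q₃ * C + q₃ ^ 2 * (a₁ + a₂)) ≤ 8 / 27 := by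
  have hu := sum_one_sub_mul_self_le hq
  have hu₁ := one_sub_mul_self_le q₁
  have hu₃ := one_sub_mul_self_le q₃
  have hv₁ := one_sub_mul_sq_le hq₁
  have hv₂ := one_sub_mul_sq_le hq₂
  have hv₃ := one_sub_mul_sq_le hq₃
  nlinarith [mul_le_mul_of_nonneg_left hu hA,
    mul_le_mul_of_nonneg_left (add_le_add hu₁ hu₃) (sub_nonneg.2 hAB),
    mul_le_mul_of_nonneg_left hu₃ (sub_nonneg.2 hBC),
    mul_le_mul_of_nonneg_left (add_le_add hv₂ hv₃) ha₁,
    mul_le_mul_of_nonneg_left (add_le_add hv₁ hv₃) ha₂,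
    mul_le_mul_of_nonneg_left (add_le_add hv₁ hv₂) ha₃]

/-- Nonexistence of solutions to System1e. -/
theorem stmt_12 :
    ¬ ∃ (q1 q2 q3 A B C a1 a2 a3 : ℝ),
      q1 ∈ Set.Icc (0:ℝ) 1 ∧ q2 ∈ Set.Icc (0:ℝ) 1 ∧ q3 ∈ Set.Icc (0:ℝ) 1 ∧
      q1 + q2 + q3 = 2 ∧
      0 ≤ A ∧ 0 ≤ B ∧ 0 ≤ C ∧ 0 ≤ a1 ∧ 0 ≤ a2 ∧ 0 ≤ a3 ∧
      C ≥ B ∧ B ≥ A ∧ A ≥ 0 ∧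
      (1 / 4) * A + B + C + a1 + a2 + a3 = 1 ∧
      q1 * B + q1 ^ 2 * (a2 + a3) > 8 / 27 ∧
      q2 * A + q2 ^ 2 * (a1 + a3) > 8 / 27 ∧
      q3 * C + q3 ^ 2 * (a1 + a2) > 8 / 27 := by
  rintro ⟨q1, q2, q3, A, B, C, a1, a2, a3, ⟨hq1, hq1'⟩, ⟨hq2, hq2'⟩, ⟨hq3, hq3'⟩, hq, hA, -, -,
    ha1, ha2, ha3, hBC, hAB, -, hbudget, h1, h2, h3⟩
  have hlt := lt_weighted_sum_of_lt (sub_nonneg.2 hq1') (sub_nonneg.2 hq2') (sub_nonneg.2 hq3')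
    (by linarith) h1 h2 h3
  have hle := weighted_sum_le hq1 hq2 hq3 hq hA hAB hBC ha1 ha2 ha3 hbudget
  linarith
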